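/- Let Ξ = {X ∈ 𝕊^n : diag(X) = e} where e is the all-ones vector, and let X̄ ∈ 𝕊_+^n with diag(X̄) = e and rank(X̄) ≤ r. If H = Diag(y) for some y ∈ ℝⁿ (i.e. H lies in the range of the adjoint of the diagonal map) and H = H¹ + H² with H¹ ∈ N_{𝕊_+^n}(X̄) and H² ∈ N_{Λ_r}(X̄), then y = 0 and H = 0. -/

import Mathlib

attribute [local instance] Matrix.frobeniusNormedAddCommGroup

/-- The trace (Frobenius) inner product of two real square matrices. -/
def minner {n : ℕ} (A B : Matrix (Fin n) (Fin n) ℝ) : ℝ :=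
  ∑ i, ∑ j, A i j * B i j

/-- The Fréchet (regular) normal cone to `S` at `x`. -/
def frechetNormalCone {n : ℕ} (S : Set (Matrix (Fin n) (Fin n) ℝ))
    (x : Matrix (Fin n) (Fin n) ℝ) : Set (Matrix (Fin n) (Fin n) ℝ) :=
  {v | ∀ ε > (0:ℝ), ∃ δ > (0:ℝ), ∀ y ∈ S, dist y x < δ →
    minner v (y - x) ≤ ε * dist y x}

/-- The limiting (Mordukhovich) normal cone to `S` at `x`. -/
def limitingNormalCone {n : ℕ} (S : Set (Matrix (Fin n) (Fin n) ℝ))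
    (x : Matrix (Fin n) (Fin n) ℝ) : Set (Matrix (Fin n) (Fin n) ℝ) :=
  {v | ∃ xs vs : ℕ → Matrix (Fin n) (Fin n) ℝ,
    (∀ k, xs k ∈ S) ∧ Filter.Tendsto xs Filter.atTop (nhds x) ∧
    Filter.Tendsto vs Filter.atTop (nhds v) ∧
    ∀ k, vs k ∈ frechetNormalCone S (xs k)}

/-!
Both `𝕊₊ⁿ` and `Λ_r` are invariant under congruence `Z ↦ A Z Aᵀ`, so through each of their
points `X` they contain the curves `t ↦ (1 + tB) X (1 + tB)ᵀ`, whose velocity at `t = 0` is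
`BX + XBᵀ`. A Fréchet normal is orthogonal to all these velocities (they come with both signs),
and by continuity so is a limiting normal. Hence `Diag(y) = H¹ + H²` is orthogonal to
`BX̄ + X̄Bᵀ` for every `B`; for `B = Diag(eᵢ)` this inner product is `2 yᵢ X̄ᵢᵢ = 2 yᵢ`.
-/

open Filter Topology Matrix

attribute [local instance] Matrix.frobeniusNormedSpace

section NormalCones

variable {n : ℕ}

local notation "𝕄" => Matrix (Fin n) (Fin n) ℝ

theorem continuous_minner : Continuous fun p : 𝕄 × 𝕄 => minner p.1 p.2 := by
  unfold minner
  fun_prop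

theorem Filter.Tendsto.minner {α : Type*} {l : Filter α} {f g : α → 𝕄} {a b : 𝕄}
    (hf : Tendsto f l (𝓝 a)) (hg : Tendsto g l (𝓝 b)) :
    Tendsto (fun k => minner (f k) (g k)) l (𝓝 (minner a b)) := by
  have h := (continuous_minner.tendsto (a, b)).comp (hf.prodMk_nhds hg)
  simp only [Function.comp_def] at h
  exact h

theorem minner_add_left (A B C : 𝕄) : minner (A + B) C = minner A C + minner B C := by
  simp only [minner, Matrix.add_apply, add_mul, Finset.sum_add_distrib]

theorem minner_smul_right (A B : 𝕄) (t : ℝ) : minner A (t • B) = t * minner A B := by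
  simp only [minner, Matrix.smul_apply, smul_eq_mul, Finset.mul_sum, mul_left_comm t]

theorem minner_neg_right (A B : 𝕄) : minner A (-B) = -minner A B := by
  simpa using minner_smul_right A B (-1)

theorem minner_diagonal_left (y : Fin n → ℝ) (W : 𝕄) :
    minner (diagonal y) W = ∑ i, y i * W i i := by
  simp [minner, diagonal_apply, ite_mul]

theorem minner_nonpos_of_tendsto_slope {S : Set 𝕄} {x v D : 𝕄} {γ : ℝ → 𝕄}
    (hv : v ∈ frechetNormalCone S x) (hγS : ∀ t > 0, γ t ∈ S)
    (hslope : Tendsto (fun t => t⁻¹ • (γ t - x)) (𝓝[>] 0) (𝓝 D)) :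
    minner v D ≤ 0 := by
  set slope := fun t : ℝ => t⁻¹ • (γ t - x)
  have hγ_sub : ∀ t > (0 : ℝ), γ t - x = t • slope t := fun t ht => by
    simp [slope, smul_smul, ht.ne']
  have hγ : Tendsto γ (𝓝[>] 0) (𝓝 x) := by
    have : Tendsto (fun t : ℝ => x + t • slope t) (𝓝[>] 0) (𝓝 (x + (0 : ℝ) • D)) :=
      tendsto_const_nhds.add ((tendsto_nhdsWithin_of_tendsto_nhds tendsto_id).smul hslope)
    rw [zero_smul, add_zero] at this
    refine this.congr' ?_
    filter_upwards [self_mem_nhdsWithin] with t (ht : 0 < t)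
    rw [← hγ_sub t ht, add_sub_cancel]
  have hε : ∀ ε > 0, minner v D ≤ ε * ‖D‖ := by
    intro ε hε
    obtain ⟨δ, hδ, hδS⟩ := hv ε hε
    refine le_of_tendsto_of_tendsto (tendsto_const_nhds.minner hslope)
      (hslope.norm.const_mul ε) ?_
    filter_upwards [self_mem_nhdsWithin, hγ (Metric.ball_mem_nhds x hδ)] with t (ht : 0 < t) hdist
    have key := hδS (γ t) (hγS t ht) hdist
    rw [dist_eq_norm, hγ_sub t ht, minner_smul_right, norm_smul, Real.norm_eq_abs,
      abs_of_pos ht, mul_left_comm] at key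
    exact le_of_mul_le_mul_left key ht
  have hlim : Tendsto (fun ε : ℝ => ε * ‖D‖) (𝓝[>] 0) (𝓝 0) := by
    simpa using ((continuous_mul_const ‖D‖).tendsto 0).mono_left nhdsWithin_le_nhds
  exact ge_of_tendsto hlim (eventually_nhdsWithin_of_forall hε)

theorem tendsto_slope_congruence (B x : 𝕄) :
    Tendsto (fun t : ℝ => t⁻¹ • ((1 + t • B) * x * (1 + t • B)ᵀ - x)) (𝓝[>] 0)
      (𝓝 (B * x + x * Bᵀ)) := by
  have hlin : Tendsto (fun t : ℝ => B * x + x * Bᵀ + t • (B * x * Bᵀ)) (𝓝[>] 0)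
      (𝓝 (B * x + x * Bᵀ)) := by
    simpa using tendsto_const_nhds.add
      (((continuous_id.smul continuous_const).tendsto (0 : ℝ)).mono_left nhdsWithin_le_nhds :
        Tendsto (fun t : ℝ => t • (B * x * Bᵀ)) (𝓝[>] 0) _)
  refine hlin.congr' ?_
  filter_upwards [self_mem_nhdsWithin] with t (ht : 0 < t)
  rw [transpose_add, transpose_one, transpose_smul]
  simp only [add_mul, mul_add, one_mul, mul_one, smul_mul_assoc, mul_smul_comm, smul_add,
    smul_smul]
  match_scalars <;> simp [ht.ne']

def CongruenceInvariant (S : Set 𝕄) : Prop :=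
  ∀ A : 𝕄, ∀ Z ∈ S, A * Z * Aᵀ ∈ S

theorem congruenceInvariant_posSemidef : CongruenceInvariant {Z : 𝕄 | Z.PosSemidef} :=
  fun A _ hZ => by
    simpa [conjTranspose_eq_transpose_of_trivial] using hZ.mul_mul_conjTranspose_same A

theorem congruenceInvariant_isHermitian_rank_le (r : ℕ) :
    CongruenceInvariant {Z : 𝕄 | Z.IsHermitian ∧ Z.rank ≤ r} := fun A Z ⟨hZ, hrank⟩ =>
  ⟨by simpa [conjTranspose_eq_transpose_of_trivial] using isHermitian_mul_mul_conjTranspose A hZ,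
    ((rank_mul_le_left _ _).trans (rank_mul_le_right _ _)).trans hrank⟩

theorem minner_mul_add_mul_transpose_eq_zero_of_mem_frechetNormalCone {S : Set 𝕄} {x v : 𝕄}
    (hS : CongruenceInvariant S) (hx : x ∈ S) (hv : v ∈ frechetNormalCone S x) (B : 𝕄) :
    minner v (B * x + x * Bᵀ) = 0 := by
  have hnonpos : ∀ B : 𝕄, minner v (B * x + x * Bᵀ) ≤ 0 := fun B =>
    minner_nonpos_of_tendsto_slope hv (fun _ _ => hS _ x hx) (tendsto_slope_congruence B x)
  have hneg := hnonpos (-B)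
  rw [transpose_neg, neg_mul, mul_neg, ← neg_add, minner_neg_right] at hneg
  linarith [hnonpos B]

theorem minner_mul_add_mul_transpose_eq_zero_of_mem_limitingNormalCone {S : Set 𝕄} {x v : 𝕄}
    (hS : CongruenceInvariant S) (hv : v ∈ limitingNormalCone S x) (B : 𝕄) :
    minner v (B * x + x * Bᵀ) = 0 := by
  obtain ⟨xs, vs, hxsS, hxs, hvs, hfrechet⟩ := hv
  have hvel : Tendsto (fun k => B * xs k + xs k * Bᵀ) atTop (𝓝 (B * x + x * Bᵀ)) :=
    (tendsto_const_nhds.mul hxs).add (hxs.mul tendsto_const_nhds)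
  refine tendsto_nhds_unique ((hvs.minner hvel).congr fun k => ?_) tendsto_const_nhds
  exact minner_mul_add_mul_transpose_eq_zero_of_mem_frechetNormalCone hS (hxsS k) (hfrechet k) B

theorem minner_diagonal_diagonal_mul_add_mul (y c : Fin n → ℝ) (X : 𝕄) :
    minner (diagonal y) (diagonal c * X + X * diagonal c) = 2 * ∑ i, y i * c i * X i i := by
  simp only [minner_diagonal_left, Matrix.add_apply, diagonal_mul, mul_diagonal,
    Finset.mul_sum]
  exact Finset.sum_congr rfl fun i _ => by ring

end NormalCones

theorem stmt11_general (n r : ℕ) (Xbar : Matrix (Fin n) (Fin n) ℝ)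
    (hdiag : ∀ i, Xbar i i = 1)
    (y : Fin n → ℝ) (H1 H2 : Matrix (Fin n) (Fin n) ℝ)
    (hH1 : H1 ∈ limitingNormalCone {Z : Matrix (Fin n) (Fin n) ℝ | Z.PosSemidef} Xbar)
    (hH2 : H2 ∈ limitingNormalCone
      {Z : Matrix (Fin n) (Fin n) ℝ | Z.IsHermitian ∧ Z.rank ≤ r} Xbar)
    (hsum : Matrix.diagonal y = H1 + H2) :
    y = 0 ∧ Matrix.diagonal y = 0 := by
  have horth : ∀ B, minner (diagonal y) (B * Xbar + Xbar * Bᵀ) = 0 := fun B => by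
    rw [hsum, minner_add_left,
      minner_mul_add_mul_transpose_eq_zero_of_mem_limitingNormalCone
        congruenceInvariant_posSemidef hH1,
      minner_mul_add_mul_transpose_eq_zero_of_mem_limitingNormalCone
        (congruenceInvariant_isHermitian_rank_le r) hH2, add_zero]
  have hy : y = 0 := funext fun i => by
    have hi := horth (diagonal (Pi.single i 1))
    rw [diagonal_transpose, minner_diagonal_diagonal_mul_add_mul] at hi
    simpa [hdiag, Pi.single_apply] using hi
  exact ⟨hy, by simp [hy]⟩

/-- let `X̄` be PSD with unit diagonal and `rank X̄ ≤ r`. If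
`H = Diag(y)` and `H = H¹ + H²` with `H¹ ∈ N_{𝕊₊ⁿ}(X̄)` and `H² ∈ N_{Λ_r}(X̄)`,
then `y = 0` and `H = 0`. -/
theorem stmt11 (n r : ℕ) (Xbar : Matrix (Fin n) (Fin n) ℝ) (hX : Xbar.PosSemidef)
    (hdiag : ∀ i, Xbar i i = 1) (hrank : Xbar.rank ≤ r)
    (y : Fin n → ℝ) (H1 H2 : Matrix (Fin n) (Fin n) ℝ)
    (hH1 : H1 ∈ limitingNormalCone {Z : Matrix (Fin n) (Fin n) ℝ | Z.PosSemidef} Xbar)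
    (hH2 : H2 ∈ limitingNormalCone
      {Z : Matrix (Fin n) (Fin n) ℝ | Z.IsHermitian ∧ Z.rank ≤ r} Xbar)
    (hsum : Matrix.diagonal y = H1 + H2) :
    y = 0 ∧ Matrix.diagonal y = 0 :=
  stmt11_general n r Xbar hdiag y H1 H2 hH1 hH2 hsum
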